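/- arXiv:1906.09491 — 5 statements merged into one kernel-verified Lean document; each statement's English description precedes it below -/
import Mathlib

section
/- Let I and J be ideals of R with J proper, I nonzero, and I contained in the radical of J. Then the sequence (ν_I^J(p^e)/p^e)_{e≥0} converges as e → ∞, and its limit — the F-threshold c^J(I) of I with respect to J — is a rational number. -/
open Filter

/-- The `q`-th Frobenius power of an ideal `J`:
the ideal generated by the `q`-th powers of the elements of `J`. -/
def frobeniusPower {R : Type*} [CommSemiring R] (J : Ideal R) (q : ℕ) : Ideal R :=
  Ideal.span ((· ^ q) '' (J : Set R))

/-- `ν_I^J(p^e)`, the largest `n` with `I ^ n ⊄ J^{[p^e]}` (and `0` if there is no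
such `n`). -/
noncomputable def nuIJ (p : ℕ) {R : Type*} [CommSemiring R] (I J : Ideal R) (e : ℕ) : ℕ :=
  sSup {n : ℕ | ¬ I ^ n ≤ frobeniusPower J (p ^ e)}

/-!
`R = K[x₁, …, xₘ]` is free over `R ^ p` on the monomials `x ^ a`, `0 ≤ aᵢ < p`, and
`v ∈ A^{[p]}` iff the `p`-th roots of all coordinates of `v` in this basis lie in `A`. Writing
`I = (f₁, …, f_r)`, this turns `g • I ^ n ⊄ J^{[p^(e+1)]}` into `g' • I ^ m ⊄ J^{[p^e]}`, where
`n = p m + ∑ cᵢ` with `cᵢ < p` and `g'` is such a root of a coordinate of `g ∏ fᵢ ^ cᵢ`. Taking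
roots of coordinates divides degrees by `p`, so starting from `g = 1` all multipliers have
degree at most a fixed `D`.

Hence, once `ν(p^e)` exceeds `W = r (p - 1)`, knowing which of the numbers
`ν(p^e) - W, …, ν(p^e)` are exponents `n` with `g • I ^ n ⊄ J^{[p^e]}`, for all `g` of degree
`≤ D`, determines the same data at `e + 1`, and `ν(p^(e+1)) = p ν(p^e) + t` with `t` read off
from it. These data range over a finite set, so they are eventually periodic, and then
`ν(p^e) / p^e = ν(p^E) / p^E + ∑_{E ≤ k < e} t_k / p^(k+1)` converges to a rational number.
Since `ν(p^(e+1)) ≥ p ν(p^e)`, either `ν` vanishes identically or it eventually exceeds `W`.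
-/

open Topology Finset

theorem div_pow_eq_add_sum_div_pow {q : ℝ} (hq : q ≠ 0) {ν a : ℕ → ℝ}
    (hν : ∀ k, ν (k + 1) = q * ν k + a k) (k : ℕ) :
    ν k / q ^ k = ν 0 + ∑ i ∈ range k, a i / q ^ (i + 1) := by
  induction k with
  | zero => simp
  | succ k ih =>
    rw [sum_range_succ, ← add_assoc, ← ih, hν]
    field_simp
    ring

theorem Function.Periodic.tsum_div_pow {a : ℕ → ℝ} {d : ℕ} (ha : Function.Periodic a d)
    (hd : 0 < d) {q : ℝ} (hq : 1 < q) (hs : Summable fun i => a i / q ^ (i + 1)) :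
    ∑' i, a i / q ^ (i + 1) = (∑ i ∈ range d, a i / q ^ (i + 1)) / (1 - (q ^ d)⁻¹) := by
  have hqd : 1 < q ^ d := one_lt_pow₀ hq hd.ne'
  have hshift : ∑' i, a (i + d) / q ^ (i + d + 1) = (∑' i, a i / q ^ (i + 1)) / q ^ d := by
    rw [← tsum_div_const]
    congr 1 with i
    rw [ha i, add_right_comm, pow_add, div_div]
  rw [eq_div_iff (by linarith [inv_lt_one_of_one_lt₀ hqd]), mul_sub, mul_one,
    ← div_eq_mul_inv, sub_eq_iff_eq_add, ← hshift]
  exact (hs.sum_add_tsum_nat_add d).symm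

theorem exists_rat_tendsto_div_pow_of_periodic {q d : ℕ} (hq : 1 < q) (hd : 0 < d)
    {a ν : ℕ → ℕ} (ha : Function.Periodic a d) (hν : ∀ k, ν (k + 1) = q * ν k + a k) :
    ∃ c : ℚ, Tendsto (fun k => (ν k : ℝ) / q ^ k) atTop (𝓝 c) := by
  have hq' : (1 : ℝ) < q := by exact_mod_cast hq
  have hbound : ∀ i, a i ≤ ∑ j ∈ range d, a j := fun i =>
    ha.map_mod_nat i ▸ single_le_sum (fun _ _ => Nat.zero_le _) (mem_range.2 (Nat.mod_lt i hd))
  have hsum : Summable fun i => (a i : ℝ) / (q : ℝ) ^ (i + 1) := by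
    refine Summable.of_nonneg_of_le (fun _ => by positivity) (fun i => ?_)
      ((summable_geometric_of_lt_one (by positivity) (inv_lt_one_of_one_lt₀ hq')).mul_left
        (∑ j ∈ range d, a j : ℝ))
    rw [inv_pow, ← div_eq_mul_inv]
    gcongr
    · exact_mod_cast hbound i
    · exact hq'.le
    · omega
  refine ⟨ν 0 + (∑ i ∈ range d, (a i : ℚ) / q ^ (i + 1)) / (1 - ((q : ℚ) ^ d)⁻¹), ?_⟩
  have hper : Function.Periodic (fun i => (a i : ℝ)) d := fun i => by simp only [ha i]
  push_cast
  rw [← hper.tsum_div_pow hd hq' hsum]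
  simp_rw [div_pow_eq_add_sum_div_pow (by positivity : (q : ℝ) ≠ 0) (ν := fun k => (ν k : ℝ))
    (a := fun i => (a i : ℝ)) (fun k => by push_cast [hν k]; ring)]
  exact hsum.hasSum.tendsto_sum_nat.const_add _

theorem tendsto_div_pow_of_tendsto_shift {q : ℝ} {ν : ℕ → ℝ} {c : ℝ} (N : ℕ)
    (h : Tendsto (fun k => ν (N + k) / q ^ k) atTop (𝓝 c)) :
    Tendsto (fun e => ν e / q ^ e) atTop (𝓝 (c / q ^ N)) := by
  rw [← tendsto_add_atTop_iff_nat N]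
  refine (h.div_const (q ^ N)).congr fun k => ?_
  rw [add_comm k N, pow_add, div_div, mul_comm]

theorem exists_rat_tendsto_div_pow_of_automaton {S : Type*} [Finite S] (F : S → S)
    (t : S → ℕ) {q : ℕ} (hq : 1 < q) {x : ℕ → S} {ν : ℕ → ℕ} {E : ℕ}
    (hx : ∀ e ≥ E, x (e + 1) = F (x e)) (hν : ∀ e ≥ E, ν (e + 1) = q * ν e + t (x e)) :
    ∃ c : ℚ, Tendsto (fun e => (ν e : ℝ) / q ^ e) atTop (𝓝 c) := by
  have horbit : ∀ k, x (E + k) = F^[k] (x E) := by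
    intro k
    induction k with
    | zero => rfl
    | succ k ih => rw [← add_assoc, hx _ (by omega), ih, Function.iterate_succ_apply']
  obtain ⟨i, j, hij, hcycle⟩ : ∃ i j, i < j ∧ F^[i] (x E) = F^[j] (x E) := by
    obtain ⟨i, j, hne, heq⟩ := Finite.exists_ne_map_eq_of_infinite fun k => F^[k] (x E)
    rcases hne.lt_or_gt with h | h
    · exact ⟨i, j, h, heq⟩
    · exact ⟨j, i, h, heq.symm⟩
  have hper : Function.Periodic (fun k => t (F^[i + k] (x E))) (j - i) := fun k => by
    dsimp only
    rw [show i + (k + (j - i)) = k + j by omega, Function.iterate_add_apply, ← hcycle,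
      ← Function.iterate_add_apply, add_comm k i]
  obtain ⟨c, hc⟩ := exists_rat_tendsto_div_pow_of_periodic hq (by omega) hper
    (ν := fun k => ν (E + i + k)) (fun k => by
      rw [← add_assoc, hν _ (by omega), add_assoc, horbit])
  refine ⟨c / q ^ (E + i), ?_⟩
  push_cast
  exact tendsto_div_pow_of_tendsto_shift (E + i) hc

theorem tendsto_atTop_of_two_mul_le {ν : ℕ → ℕ} (h : ∀ e, 2 * ν e ≤ ν (e + 1)) {e₀ : ℕ}
    (he₀ : ν e₀ ≠ 0) : Tendsto ν atTop atTop := by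
  have hgrow : ∀ k, k < ν (e₀ + k) := by
    intro k
    induction k with
    | zero => exact Nat.pos_of_ne_zero he₀
    | succ k ih =>
      have := h (e₀ + k)
      rw [← add_assoc]
      omega
  refine tendsto_atTop_atTop.2 fun B => ⟨e₀ + B, fun e he => ?_⟩
  have := hgrow (e - e₀)
  rw [Nat.add_sub_cancel' (by omega)] at this
  omega

theorem Nat.sSup_setOf_add_mem {S : Set ℕ} (hS : BddAbove S) {a : ℕ} (ha : a ∈ S) :
    sSup {τ | a + τ ∈ S} = sSup S - a := by
  have haS := le_csSup hS ha
  refine le_antisymm (csSup_le ⟨0, by simpa⟩ fun τ hτ => ?_) (le_csSup ⟨sSup S - a, ?_⟩ ?_)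
  · have := le_csSup hS hτ
    omega
  · intro τ hτ
    have := le_csSup hS hτ
    omega
  · show a + (sSup S - a) ∈ S
    rw [Nat.add_sub_cancel' haS]
    exact Nat.sSup_mem ⟨a, ha⟩ hS

section FrobeniusPower

variable {R : Type*} [CommSemiring R]

theorem frobeniusPower_one (J : Ideal R) : frobeniusPower J 1 = J := by
  simp [frobeniusPower]

theorem pow_mem_frobeniusPower {J : Ideal R} {x : R} (hx : x ∈ J) (q : ℕ) :
    x ^ q ∈ frobeniusPower J q :=
  Ideal.subset_span ⟨x, hx, rfl⟩

theorem frobeniusPower_frobeniusPower (p : ℕ) [ExpChar R p] (J : Ideal R) (q : ℕ) :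
    frobeniusPower (frobeniusPower J q) p = frobeniusPower J (q * p) := by
  refine le_antisymm (Ideal.span_le.2 ?_) (Ideal.span_le.2 ?_)
  · rintro _ ⟨y, hy, rfl⟩
    rw [SetLike.mem_coe]
    induction hy using Submodule.span_induction with
    | mem _ hx =>
      obtain ⟨x, hx, rfl⟩ := hx
      simpa only [← pow_mul] using pow_mem_frobeniusPower hx (q * p)
    | zero => simp [zero_pow (expChar_pos R p).ne']
    | add x y _ _ hx hy => simpa only [add_pow_expChar] using Ideal.add_mem _ hx hy
    | smul r x _ hx => simpa only [smul_eq_mul, mul_pow] using Ideal.mul_mem_left _ _ hx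
  · rintro _ ⟨x, hx, rfl⟩
    simpa only [← pow_mul, SetLike.mem_coe] using
      pow_mem_frobeniusPower (pow_mem_frobeniusPower hx q) p

theorem frobeniusPower_pow_succ (p : ℕ) [ExpChar R p] (J : Ideal R) (e : ℕ) :
    frobeniusPower J (p ^ (e + 1)) = frobeniusPower (frobeniusPower J (p ^ e)) p := by
  rw [frobeniusPower_frobeniusPower, pow_succ]

end FrobeniusPower

section PowerSpan

variable {R : Type*} [CommSemiring R] {ι : Type*} [Fintype ι]

theorem pow_span_range_le_span_prod_pow [DecidableEq ι] (f : ι → R) (n : ℕ) :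
    Ideal.span (Set.range f) ^ n ≤
      Ideal.span {x | ∃ k : ι → ℕ, ∑ i, k i = n ∧ ∏ i, f i ^ k i = x} := by
  induction n with
  | zero =>
    rw [pow_zero, Ideal.one_eq_top, top_le_iff, Ideal.eq_top_iff_one]
    exact Ideal.subset_span ⟨0, by simp, by simp⟩
  | succ n ih =>
    rw [pow_succ]
    refine (Ideal.mul_mono_left ih).trans ?_
    rw [Ideal.span_mul_span']
    refine Ideal.span_mono ?_
    rintro _ ⟨_, ⟨k, hk, rfl⟩, _, ⟨j, rfl⟩, rfl⟩
    refine ⟨k + Pi.single j 1, by simp [sum_add_distrib, hk], ?_⟩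
    simp only [Pi.add_apply, pow_add, prod_mul_distrib]
    congr 1
    rw [Fintype.prod_eq_single j fun i hi => by simp [hi]]
    simp

theorem prod_pow_mem_pow_sum {I : Ideal R} {f : ι → R} (hf : ∀ i, f i ∈ I) (k : ι → ℕ) :
    ∏ i, f i ^ k i ∈ I ^ ∑ i, k i := by
  rw [← prod_pow_eq_pow_sum]
  exact Ideal.prod_mem_prod fun i _ => Ideal.pow_mem_pow (hf i) _

end PowerSpan

theorem prod_pow_eq_pow_mul_prod_pow_mod {M ι : Type*} [CommMonoid M] [Fintype ι] (f : ι → M)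
    (k : ι → ℕ) (p : ℕ) :
    ∏ i, f i ^ k i = (∏ i, f i ^ (k i / p)) ^ p * ∏ i, f i ^ (k i % p) := by
  rw [← prod_pow, ← prod_mul_distrib]
  refine prod_congr rfl fun i _ => ?_
  rw [← pow_mul, ← pow_add, mul_comm, Nat.div_add_mod]

def expSet {R : Type*} [CommSemiring R] (I A : Ideal R) (g : R) : Set ℕ :=
  {n | ∃ u ∈ I ^ n, g * u ∉ A}

section ExpSet

variable {R : Type*} [CommSemiring R] (I A : Ideal R)

theorem nuIJ_eq_sSup_expSet (p : ℕ) (J : Ideal R) (e : ℕ) :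
    nuIJ p I J e = sSup (expSet I (frobeniusPower J (p ^ e)) 1) := by
  simp only [nuIJ, expSet, one_mul, SetLike.not_le_iff_exists]

theorem expSet_subset_expSet_one (g : R) : expSet I A g ⊆ expSet I A 1 :=
  fun _ ⟨u, hu, hgu⟩ => ⟨u, hu, by rw [one_mul]; exact fun h => hgu (A.mul_mem_left g h)⟩

end ExpSet

namespace MvPolynomial

variable {σ K : Type*} [Finite σ] [CommSemiring K] {p : ℕ}

variable (p) in
noncomputable def expOfDigits (a : σ → Fin p) : σ →₀ ℕ :=
  Finsupp.equivFunOnFinite.symm fun i => a i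

@[simp]
theorem expOfDigits_apply (a : σ → Fin p) (i : σ) : expOfDigits p a i = a i := rfl

variable [Fact p.Prime] [CharP K p] [PerfectRing K p]

theorem nsmul_add_expOfDigits_eq_iff (u b : σ →₀ ℕ) (a : σ → Fin p) :
    p • u + expOfDigits p a = b ↔ ∀ i, b i / p = u i ∧ b i % p = a i := by
  simp only [Finsupp.ext_iff, Finsupp.add_apply, Finsupp.smul_apply, smul_eq_mul,
    expOfDigits_apply, Nat.div_mod_unique (Fact.out : p.Prime).pos, (a _).isLt, and_true]
  exact forall_congr' fun i => by rw [add_comm]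

variable (p) in
/-- The coordinate of `f` at `X ^ a` in the basis `(X ^ a)_{a < p}` of `K[σ]` over `K[σ] ^ p`,
with its `p`-th root taken: `f = ∑ a, X ^ a * frobeniusComponent p a f ^ p`. -/
noncomputable def frobeniusComponent (a : σ → Fin p) :
    MvPolynomial σ K →+ MvPolynomial σ K where
  toFun f := AddMonoidAlgebra.ofCoeff <| Finsupp.mapRange (frobeniusEquiv K p).symm (map_zero _)
    (Finsupp.comapDomain (fun u => p • u + expOfDigits p a) (AddMonoidAlgebra.coeff f)
      (fun _ _ _ _ h => smul_right_injective _ (Fact.out : p.Prime).ne_zero (add_right_cancel h)))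
  map_zero' := by ext; exact (frobeniusEquiv K p).symm.map_zero
  map_add' f g := by ext; exact (frobeniusEquiv K p).symm.map_add _ _

theorem coeff_frobeniusComponent (a : σ → Fin p) (u : σ →₀ ℕ) (f : MvPolynomial σ K) :
    coeff u (frobeniusComponent p a f) =
      (frobeniusEquiv K p).symm (coeff (p • u + expOfDigits p a) f) := rfl

theorem frobeniusComponent_monomial_of_mod {a : σ → Fin p} {b : σ →₀ ℕ}
    (hb : ∀ i, b i % p = a i) (k : K) :
    frobeniusComponent p a (monomial b k) =
      monomial (b.mapRange (· / p) (Nat.zero_div p)) ((frobeniusEquiv K p).symm k) := by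
  classical
  ext u
  have hiff : b = p • u + expOfDigits p a ↔ b.mapRange (· / p) (Nat.zero_div p) = u := by
    rw [eq_comm, nsmul_add_expOfDigits_eq_iff, Finsupp.ext_iff]
    simp only [hb, and_true, Finsupp.mapRange_apply]
  rw [coeff_frobeniusComponent, coeff_monomial, coeff_monomial]
  by_cases hu : b.mapRange (· / p) (Nat.zero_div p) = u
  · rw [if_pos (hiff.2 hu), if_pos hu]
  · rw [if_neg (mt hiff.1 hu), if_neg hu, map_zero]

theorem frobeniusComponent_monomial_of_not_mod {a : σ → Fin p} {b : σ →₀ ℕ}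
    (hb : ¬ ∀ i, b i % p = a i) (k : K) : frobeniusComponent p a (monomial b k) = 0 := by
  classical
  ext u
  rw [coeff_frobeniusComponent, coeff_monomial, if_neg, map_zero, coeff_zero]
  rintro rfl
  exact hb fun i => ((nsmul_add_expOfDigits_eq_iff u _ a).1 rfl i).2

theorem frobeniusComponent_pow_mul (a : σ → Fin p) (f g : MvPolynomial σ K) :
    frobeniusComponent p a (f ^ p * g) = f * frobeniusComponent p a g := by
  induction f using MvPolynomial.induction_on' with
  | monomial b' k' =>
    induction g using MvPolynomial.induction_on' with
    | monomial b k =>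
      have hmod : ∀ i, (p • b' + b) i % p = b i % p := fun i => by simp
      rw [monomial_pow, monomial_mul]
      by_cases h : ∀ i, b i % p = a i
      · rw [frobeniusComponent_monomial_of_mod fun i => (hmod i).trans (h i),
          frobeniusComponent_monomial_of_mod h, monomial_mul, map_mul, frobeniusEquiv_symm_pow]
        congr 2
        ext i
        simp [Nat.mul_add_div (Fact.out : p.Prime).pos]
      · rw [frobeniusComponent_monomial_of_not_mod fun h' => h fun i => (hmod i).symm.trans (h' i),
          frobeniusComponent_monomial_of_not_mod h, mul_zero]
    | add g₁ g₂ h₁ h₂ => rw [mul_add, map_add, map_add, h₁, h₂, mul_add]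
  | add f₁ f₂ h₁ h₂ => rw [add_pow_char, add_mul, map_add, h₁, h₂, add_mul]

theorem frobeniusComponent_zero_pow (f : MvPolynomial σ K) :
    frobeniusComponent p 0 (f ^ p) = f := by
  rw [← mul_one (f ^ p), frobeniusComponent_pow_mul, ← C_1, C_apply,
    frobeniusComponent_monomial_of_mod (fun i => by simp), map_one]
  simp

theorem sum_monomial_mul_frobeniusComponent_pow [Fintype σ] [DecidableEq σ]
    (f : MvPolynomial σ K) :
    ∑ a : σ → Fin p, monomial (expOfDigits p a) 1 * frobeniusComponent p a f ^ p = f := by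
  induction f using MvPolynomial.induction_on' with
  | monomial b k =>
    have hp := (Fact.out : p.Prime).pos
    rw [sum_eq_single (fun i => ⟨b i % p, Nat.mod_lt _ hp⟩)]
    · rw [frobeniusComponent_monomial_of_mod (fun i => rfl), monomial_pow,
        frobeniusEquiv_symm_pow_p, monomial_mul, one_mul,
        show expOfDigits p _ + p • _ = b from Finsupp.ext fun i => by simp [Nat.mod_add_div]]
    · intro a _ ha
      have hmod : ¬ ∀ i, b i % p = a i := fun h => ha (_root_.funext fun i => Fin.ext (h i).symm)
      rw [frobeniusComponent_monomial_of_not_mod hmod, zero_pow (Fact.out : p.Prime).ne_zero,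
        mul_zero]
    · simp
  | add f g hf hg =>
    simp only [map_add, add_pow_char, mul_add, sum_add_distrib, hf, hg]

theorem totalDegree_frobeniusComponent_le (a : σ → Fin p) (f : MvPolynomial σ K) :
    (frobeniusComponent p a f).totalDegree ≤ f.totalDegree / p := by
  refine Finset.sup_le fun u hu => ?_
  rw [Nat.le_div_iff_mul_le (Fact.out : p.Prime).pos]
  have hcoeff : p • u + expOfDigits p a ∈ f.support := by
    rw [mem_support_iff, coeff_frobeniusComponent] at hu
    exact mem_support_iff.2 fun h => hu (by rw [h, map_zero])
  refine le_trans ?_ (le_totalDegree hcoeff)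
  change u.degree * p ≤ (p • u + expOfDigits p a).degree
  rw [map_add, map_nsmul, smul_eq_mul, mul_comm]
  exact Nat.le_add_right _ _

theorem mem_frobeniusPower_iff {A : Ideal (MvPolynomial σ K)} {v : MvPolynomial σ K} :
    v ∈ frobeniusPower A p ↔ ∀ a : σ → Fin p, frobeniusComponent p a v ∈ A := by
  classical
  have := Fintype.ofFinite σ
  constructor
  · intro hv a
    obtain ⟨n, r, x, rfl⟩ := Submodule.mem_span_set'.1 hv
    rw [map_sum]
    refine Ideal.sum_mem _ fun i _ => ?_
    obtain ⟨y, hy, hxy⟩ := (x i).2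
    rw [smul_eq_mul, ← hxy, mul_comm, frobeniusComponent_pow_mul]
    exact A.mul_mem_right _ hy
  · intro h
    rw [← sum_monomial_mul_frobeniusComponent_pow v]
    exact Ideal.sum_mem _ fun a _ => Ideal.mul_mem_left _ _ (pow_mem_frobeniusPower (h a) p)

theorem pow_mem_frobeniusPower_iff {A : Ideal (MvPolynomial σ K)} {v : MvPolynomial σ K} :
    v ^ p ∈ frobeniusPower A p ↔ v ∈ A := by
  refine ⟨fun h => ?_, fun h => pow_mem_frobeniusPower h p⟩
  simpa only [frobeniusComponent_zero_pow] using mem_frobeniusPower_iff.1 h 0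

theorem mul_mem_expSet_frobeniusPower {I A : Ideal (MvPolynomial σ K)} {n : ℕ}
    (hn : n ∈ expSet I A 1) : p * n ∈ expSet I (frobeniusPower A p) 1 := by
  obtain ⟨u, hu, hAu⟩ := hn
  refine ⟨u ^ p, ?_, ?_⟩
  · rw [mul_comm, pow_mul]
    exact Ideal.pow_mem_pow hu p
  · rw [one_mul, pow_mem_frobeniusPower_iff]
    rwa [one_mul] at hAu

theorem mem_expSet_frobeniusPower_iff {ι : Type*} [Fintype ι] {f : ι → MvPolynomial σ K}
    {I : Ideal (MvPolynomial σ K)} (hf : Ideal.span (Set.range f) = I)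
    (A : Ideal (MvPolynomial σ K)) (g : MvPolynomial σ K) (n : ℕ) :
    n ∈ expSet I (frobeniusPower A p) g ↔ ∃ (c : ι → Fin p) (a : σ → Fin p) (m : ℕ),
      n = p * m + ∑ i, (c i : ℕ) ∧
        m ∈ expSet I A (frobeniusComponent p a (g * ∏ i, f i ^ (c i : ℕ))) := by
  classical
  have hfI : ∀ i, f i ∈ I := fun i => hf ▸ Ideal.subset_span ⟨i, rfl⟩
  constructor
  · rintro ⟨u, hu, hgu⟩
    by_contra! H
    have hle : I ^ n ≤ (frobeniusPower A p).colon {g} := by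
      rw [← hf]
      refine (pow_span_range_le_span_prod_pow f n).trans (Ideal.span_le.2 ?_)
      rintro _ ⟨k, rfl, rfl⟩
      rw [SetLike.mem_coe, Submodule.mem_colon_singleton, smul_eq_mul,
        prod_pow_eq_pow_mul_prod_pow_mod f k p, mem_frobeniusPower_iff]
      intro a
      have hsum : ∑ i, k i = p * ∑ i, k i / p + ∑ i, k i % p := by
        rw [mul_sum, ← sum_add_distrib]
        exact sum_congr rfl fun i _ => (Nat.div_add_mod _ _).symm
      have hnot := H (fun i => ⟨k i % p, Nat.mod_lt _ (Fact.out : p.Prime).pos⟩) a _ hsum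
      rw [mul_comm, mul_left_comm, frobeniusComponent_pow_mul, mul_comm]
      by_contra hA
      exact hnot ⟨_, prod_pow_mem_pow_sum hfI _, hA⟩
    exact hgu (by simpa [mul_comm] using Submodule.mem_colon_singleton.1 (hle hu))
  · rintro ⟨c, a, m, rfl, w, hw, hgw⟩
    refine ⟨w ^ p * ∏ i, f i ^ (c i : ℕ), ?_, fun h => hgw ?_⟩
    · rw [pow_add, mul_comm p m, pow_mul]
      exact Ideal.mul_mem_mul (Ideal.pow_mem_pow hw p) (prod_pow_mem_pow_sum hfI _)
    · have := mem_frobeniusPower_iff.1 h a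
      rwa [mul_left_comm, frobeniusComponent_pow_mul, mul_comm] at this

end MvPolynomial

section DegreeBound

open MvPolynomial

variable (p : ℕ) {K σ ι : Type*} [CommSemiring K] [Fintype ι] (f : ι → MvPolynomial σ K)

variable (ι) in
def weightBound : ℕ := Fintype.card ι * (p - 1)

variable {p} in
theorem sum_le_weightBound (c : ι → Fin p) : ∑ i, (c i : ℕ) ≤ weightBound p ι := by
  simpa [weightBound] using
    sum_le_card_nsmul univ (fun i => (c i : ℕ)) (p - 1) fun i _ => Nat.le_pred_of_lt (c i).isLt

def degreeBound : ℕ := weightBound p ι * univ.sup fun i => (f i).totalDegree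

variable {p} in
theorem totalDegree_prod_pow_le (c : ι → Fin p) :
    (∏ i, f i ^ (c i : ℕ)).totalDegree ≤ degreeBound p f :=
  calc (∏ i, f i ^ (c i : ℕ)).totalDegree
      ≤ ∑ i, (f i ^ (c i : ℕ)).totalDegree := totalDegree_finsetProd _ _
    _ ≤ ∑ _i : ι, (p - 1) * univ.sup fun i => (f i).totalDegree :=
        sum_le_sum fun i _ => (totalDegree_pow _ _).trans (Nat.mul_le_mul
          (Nat.le_pred_of_lt (c i).isLt) (le_sup (f := fun i => (f i).totalDegree) (mem_univ i)))
    _ = degreeBound p f := by simp [degreeBound, weightBound, mul_assoc]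

end DegreeBound

section Automaton

open MvPolynomial

variable (p : ℕ) [Fact p.Prime] {K σ ι : Type*} [Field K] [Finite K] [CharP K p] [Finite σ]
  [Fintype ι] (f : ι → MvPolynomial σ K)

abbrev Multiplier : Type _ := restrictTotalDegree σ K (degreeBound p f)

instance : Finite (Multiplier p f) := Module.finite_of_finite K

variable {p f} in
noncomputable def Multiplier.step (g : Multiplier p f) (c : ι → Fin p) (a : σ → Fin p) :
    Multiplier p f :=
  ⟨frobeniusComponent p a (g * ∏ i, f i ^ (c i : ℕ)), by
    rw [mem_restrictTotalDegree]
    refine (totalDegree_frobeniusComponent_le a _).trans (Nat.div_le_of_le_mul ?_)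
    calc (g * ∏ i, f i ^ (c i : ℕ)).totalDegree
        ≤ degreeBound p f + degreeBound p f := (totalDegree_mul _ _).trans
          (add_le_add ((mem_restrictTotalDegree _ _ _).1 g.2) (totalDegree_prod_pow_le f c))
      _ ≤ p * degreeBound p f := by
          rw [← two_mul]
          exact Nat.mul_le_mul_right _ (Fact.out : p.Prime).two_le⟩

noncomputable def Multiplier.one : Multiplier p f :=
  ⟨1, (mem_restrictTotalDegree _ _ _).2 (by simp)⟩

abbrev State : Type _ := Multiplier p f → Fin (weightBound p ι + 1) → Prop

def state (I J : Ideal (MvPolynomial σ K)) (e : ℕ) : State p f :=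
  fun g i => nuIJ p I J e - i ∈ expSet I (frobeniusPower J (p ^ e)) g

variable {p f}

noncomputable def increment (s : State p f) : ℕ :=
  sSup {τ | ∃ (c : ι → Fin p) (a : σ → Fin p) (i : Fin (weightBound p ι + 1)),
    τ + p * i = ∑ j, (c j : ℕ) ∧ s ((Multiplier.one p f).step c a) i}

noncomputable def transition (s : State p f) : State p f :=
  fun g j => ∃ (c : ι → Fin p) (a : σ → Fin p) (i : Fin (weightBound p ι + 1)),
    j + ∑ k, (c k : ℕ) = increment s + p * i ∧ s (g.step c a) i

variable {I J : Ideal (MvPolynomial σ K)} (hf : Ideal.span (Set.range f) = I)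
  (hIJ : I ≤ J.radical)

include hf in
theorem mem_expSet_succ_iff (g : MvPolynomial σ K) (e n : ℕ) :
    n ∈ expSet I (frobeniusPower J (p ^ (e + 1))) g ↔
      ∃ (c : ι → Fin p) (a : σ → Fin p) (m : ℕ), n = p * m + ∑ i, (c i : ℕ) ∧
        m ∈ expSet I (frobeniusPower J (p ^ e))
          (frobeniusComponent p a (g * ∏ i, f i ^ (c i : ℕ))) := by
  rw [frobeniusPower_pow_succ, mem_expSet_frobeniusPower_iff hf]

include hf hIJ in
theorem bddAbove_expSet (e : ℕ) : BddAbove (expSet I (frobeniusPower J (p ^ e)) 1) := by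
  induction e with
  | zero =>
    obtain ⟨N, hN⟩ := Ideal.exists_pow_le_of_le_radical_of_fg hIJ
      (hf ▸ Submodule.fg_span (Set.finite_range f))
    refine ⟨N, fun n ⟨u, hu, hJu⟩ => ?_⟩
    by_contra! hNn
    rw [one_mul, pow_zero, frobeniusPower_one] at hJu
    exact hJu (hN (Ideal.pow_le_pow_right hNn.le hu))
  | succ e ih =>
    obtain ⟨B, hB⟩ := ih
    refine ⟨p * B + weightBound p ι, fun n hn => ?_⟩
    obtain ⟨c, a, m, rfl, hm⟩ := (mem_expSet_succ_iff hf 1 e n).1 hn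
    exact add_le_add (Nat.mul_le_mul_left p (hB (expSet_subset_expSet_one _ _ _ hm)))
      (sum_le_weightBound c)

include hf hIJ in
theorem le_nuIJ_of_mem_expSet {g : MvPolynomial σ K} {e n : ℕ}
    (hn : n ∈ expSet I (frobeniusPower J (p ^ e)) g) : n ≤ nuIJ p I J e := by
  rw [nuIJ_eq_sSup_expSet]
  exact le_csSup (bddAbove_expSet hf hIJ e) (expSet_subset_expSet_one _ _ _ hn)

include hf hIJ in
theorem nuIJ_mem_expSet {e : ℕ} (he : 0 < nuIJ p I J e) :
    nuIJ p I J e ∈ expSet I (frobeniusPower J (p ^ e)) 1 := by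
  rw [nuIJ_eq_sSup_expSet] at he ⊢
  exact Nat.sSup_mem (Set.nonempty_iff_ne_empty.2 fun h => by simp [h] at he)
    (bddAbove_expSet hf hIJ e)

include hf hIJ in
theorem mul_nuIJ_le_nuIJ_succ (e : ℕ) : p * nuIJ p I J e ≤ nuIJ p I J (e + 1) := by
  rcases Nat.eq_zero_or_pos (nuIJ p I J e) with h | h
  · simp [h]
  · refine le_nuIJ_of_mem_expSet (g := 1) hf hIJ ?_
    rw [frobeniusPower_pow_succ]
    exact mul_mem_expSet_frobeniusPower (nuIJ_mem_expSet hf hIJ h)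

include hf hIJ in
theorem mem_expSet_succ_iff_state {e : ℕ} (hW : weightBound p ι < nuIJ p I J e)
    (g : Multiplier p f) {n : ℕ} (hn : p * nuIJ p I J e ≤ n + weightBound p ι) :
    n ∈ expSet I (frobeniusPower J (p ^ (e + 1))) g ↔
      ∃ (c : ι → Fin p) (a : σ → Fin p) (i : Fin (weightBound p ι + 1)),
        n + p * i = p * nuIJ p I J e + ∑ j, (c j : ℕ) ∧ state p f I J e (g.step c a) i := by
  rw [mem_expSet_succ_iff hf]
  have hp := (Fact.out : p.Prime).two_le
  constructor
  · rintro ⟨c, a, m, rfl, hm⟩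
    have hmN : m ≤ nuIJ p I J e := le_nuIJ_of_mem_expSet hf hIJ hm
    have hsplit : p * (nuIJ p I J e - m) + p * m = p * nuIJ p I J e := by
      rw [← mul_add, Nat.sub_add_cancel hmN]
    have h2 := Nat.mul_le_mul_right (nuIJ p I J e - m) hp
    have hc := sum_le_weightBound c
    refine ⟨c, a, ⟨nuIJ p I J e - m, by omega⟩, by dsimp only; omega, ?_⟩
    show nuIJ p I J e - (nuIJ p I J e - m) ∈ _
    rwa [Nat.sub_sub_self hmN]
  · rintro ⟨c, a, i, hi, hmem⟩
    have hiN : (i : ℕ) ≤ nuIJ p I J e := by have := i.isLt; omega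
    have hsplit : p * (nuIJ p I J e - i) + p * i = p * nuIJ p I J e := by
      rw [← mul_add, Nat.sub_add_cancel hiN]
    exact ⟨c, a, nuIJ p I J e - i, by omega, hmem⟩

include hf hIJ in
theorem nuIJ_succ_eq {e : ℕ} (hW : weightBound p ι < nuIJ p I J e) :
    nuIJ p I J (e + 1) = p * nuIJ p I J e + increment (state p f I J e) := by
  have hmem : p * nuIJ p I J e ∈ expSet I (frobeniusPower J (p ^ (e + 1))) 1 := by
    rw [frobeniusPower_pow_succ]
    exact mul_mem_expSet_frobeniusPower (nuIJ_mem_expSet hf hIJ (by omega))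
  have hset : {τ | ∃ (c : ι → Fin p) (a : σ → Fin p) (i : Fin (weightBound p ι + 1)),
      τ + p * i = ∑ j, (c j : ℕ) ∧ state p f I J e ((Multiplier.one p f).step c a) i} =
      {τ | p * nuIJ p I J e + τ ∈ expSet I (frobeniusPower J (p ^ (e + 1))) 1} := by
    ext τ
    refine ((mem_expSet_succ_iff_state hf hIJ hW (Multiplier.one p f) (by omega)).trans ?_).symm
    simp only [add_assoc, Nat.add_left_cancel_iff]
    rfl
  have hle := mul_nuIJ_le_nuIJ_succ hf hIJ e
  rw [increment, hset, Nat.sSup_setOf_add_mem (bddAbove_expSet hf hIJ _) hmem,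
    ← nuIJ_eq_sSup_expSet]
  omega

include hf hIJ in
theorem state_succ {e : ℕ} (hW : weightBound p ι < nuIJ p I J e) :
    state p f I J (e + 1) = transition (state p f I J e) := by
  have hsucc := nuIJ_succ_eq hf hIJ hW
  have hle : nuIJ p I J e ≤ p * nuIJ p I J e :=
    Nat.le_mul_of_pos_left _ (Fact.out : p.Prime).pos
  funext g j
  have hj := j.isLt
  refine propext ((mem_expSet_succ_iff_state hf hIJ hW g (by omega)).trans ?_)
  refine exists_congr fun c => exists_congr fun a => exists_congr fun i => and_congr_left' ?_
  omega

end Automaton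

theorem fThreshold_exists_and_is_rational_general
    (p : ℕ) (hp : p.Prime) (K : Type*) [Field K] [Fintype K] [CharP K p]
    (m : ℕ) (I J : Ideal (MvPolynomial (Fin m) K))
    (hIJ : I ≤ J.radical) :
    ∃ c : ℚ, Tendsto (fun e : ℕ => (nuIJ p I J e : ℝ) / (p : ℝ) ^ e) atTop (nhds (c : ℝ)) := by
  have := Fact.mk hp
  obtain ⟨r, f, hf⟩ :=
    Submodule.fg_iff_exists_fin_generating_family.1 (IsNoetherian.noetherian I)
  by_cases h0 : ∀ e, nuIJ p I J e = 0
  · exact ⟨0, by simp [h0]⟩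
  obtain ⟨e₀, he₀⟩ := not_forall.1 h0
  have hgrow : Tendsto (nuIJ p I J) atTop atTop :=
    tendsto_atTop_of_two_mul_le (fun e => (Nat.mul_le_mul_right _ hp.two_le).trans
      (mul_nuIJ_le_nuIJ_succ hf hIJ e)) he₀
  obtain ⟨E, hE⟩ := eventually_atTop.1 (hgrow.eventually_gt_atTop (weightBound p (Fin r)))
  exact exists_rat_tendsto_div_pow_of_automaton transition increment hp.one_lt
    (fun e he => state_succ hf hIJ (hE e he)) (fun e he => nuIJ_succ_eq hf hIJ (hE e he))

/-- For ideals `I ⊆ √J` with `J` proper and `I` nonzero, the sequence `ν_I^J(p^e)/p^e`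
converges, and its limit (the F-threshold of `I` with respect to `J`) is a rational
number. -/
theorem fThreshold_exists_and_is_rational
    (p : ℕ) (hp : p.Prime) (K : Type*) [Field K] [Fintype K] [CharP K p]
    (m : ℕ) (I J : Ideal (MvPolynomial (Fin m) K))
    (hJ : J ≠ ⊤) (hI : I ≠ ⊥) (hIJ : I ≤ J.radical) :
    ∃ c : ℚ, Tendsto (fun e : ℕ => (nuIJ p I J e : ℝ) / (p : ℝ) ^ e) atTop (nhds (c : ℝ)) :=
  fThreshold_exists_and_is_rational_general p hp K m I J hIJ
end

section
/- Let f ∈ 𝔪 be a nonzero polynomial and let c = c^𝔪(f) be its F-pure threshold at the origin. Then for every e ∈ ℕ, ν_f(p^e) = ⌈p^e · c⌉ − 1. -/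
open Filter

/-- `ν_f(p^e)`, the largest `n` with `f ^ n ∉ 𝔪^{[p^e]}`, where `𝔪` is the ideal
generated by the variables.  (The defining set is finite and contains `0`.) -/
noncomputable def nu (p : ℕ) {m : ℕ} {K : Type*} [Field K]
    (f : MvPolynomial (Fin m) K) (e : ℕ) : ℕ :=
  sSup {n : ℕ |
    f ^ n ∉ frobeniusPower
      (Ideal.span (Set.range (MvPolynomial.X : Fin m → MvPolynomial (Fin m) K))) (p ^ e)}

/-!
Since Frobenius is additive, `𝔪^[p^e] = (x₁^(p^e), …, xₘ^(p^e))` is a monomial ideal, so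
`f^n ∉ 𝔪^[p^e]` iff some monomial of `f^n` has all exponents `< p^e`; these `n` form the
interval `[0, ν(e)]`.

Raising `f^(ν(e)+1) ∈ 𝔪^[p^e]` to the `p`-th power gives `ν(e+1) + 1 ≤ p (ν(e) + 1)`, so
`(ν(e) + 1) / p^e` decreases to `c` and `p^e c ≤ ν(e) + 1`.

Conversely, if all exponents of `f` are `< p^k`, the monomials of `g^(p^k)` (exponents divisible
by `p^k`) and of `f` combine without cancellation, by division with remainder. With `g = f^ν(e)`
this gives `p^k ν(e) + 1 ≤ ν(e+k)`, and with `f` replaced by `1` it shows that `ν(e) / p^e`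
increases to `c`. Hence `p^k ν(e) + 1 ≤ p^(e+k) c`, i.e. `ν(e) < p^e c`, and
`⌈p^e c⌉ = ν(e) + 1`.
-/

open MvPolynomial

section FrobeniusPower

variable {R : Type*} [CommSemiring R] (p : ℕ) [ExpChar R p]

theorem frobeniusPower_span (S : Set R) (e : ℕ) :
    frobeniusPower (Ideal.span S) (p ^ e) = Ideal.span ((· ^ p ^ e) '' S) := by
  refine le_antisymm (Ideal.span_le.mpr ?_) (Ideal.span_mono (Set.image_mono Ideal.subset_span))
  rintro _ ⟨g, hg, rfl⟩
  rw [SetLike.mem_coe]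
  induction hg using Submodule.span_induction with
  | mem x hx => exact Ideal.subset_span ⟨x, hx, rfl⟩
  | zero => simp [zero_pow (expChar_pow_pos R p e).ne']
  | add a b _ _ ha hb => simpa only [add_pow_expChar_pow] using Ideal.add_mem _ ha hb
  | smul r a _ ha => simpa only [smul_eq_mul, mul_pow] using Ideal.mul_mem_left _ _ ha

theorem frobeniusPower_frobeniusPower_s2 (J : Ideal R) (a b : ℕ) :
    frobeniusPower (frobeniusPower J (p ^ a)) (p ^ b) = frobeniusPower J (p ^ (a + b)) := by
  rw [frobeniusPower.eq_1 J, frobeniusPower_span, Set.image_image, frobeniusPower]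
  simp only [← pow_mul, ← pow_add]

theorem pow_mem_frobeniusPower_of_mem {J : Ideal R} {a : ℕ} {g : R}
    (hg : g ∈ frobeniusPower J (p ^ a)) (b : ℕ) :
    g ^ p ^ b ∈ frobeniusPower J (p ^ (a + b)) := by
  rw [← frobeniusPower_frobeniusPower_s2]
  exact Ideal.subset_span ⟨g, hg, rfl⟩

end FrobeniusPower

theorem Nat.eq_and_eq_of_mul_add_eq_mul_add {q w v a b : ℕ} (hv : v < q) (hb : b < q)
    (h : q * w + v = q * a + b) : w = a ∧ v = b := by
  have hq : 0 < q := by omega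
  have hdiv := congrArg (· / q) h
  have hmod := congrArg (· % q) h
  simp only [Nat.mul_add_div hq, Nat.div_eq_of_lt hv, Nat.div_eq_of_lt hb] at hdiv
  simp only [Nat.mul_add_mod, Nat.mod_eq_of_lt hv, Nat.mod_eq_of_lt hb] at hmod
  exact ⟨by simpa using hdiv, hmod⟩

theorem Nat.mem_iff_le_sSup_of_isLowerSet {S : Set ℕ} (hS : IsLowerSet S) (hne : S.Nonempty)
    (hbdd : BddAbove S) {n : ℕ} : n ∈ S ↔ n ≤ sSup S :=
  ⟨fun hn => le_csSup hbdd hn, fun hn => hS hn (Nat.sSup_mem hne hbdd)⟩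

theorem Ideal.isLowerSet_setOf_pow_notMem {R : Type*} [CommSemiring R] (I : Ideal R) (f : R) :
    IsLowerSet {n : ℕ | f ^ n ∉ I} :=
  fun _ _ hle hn hmem => hn (I.pow_mem_of_pow_mem hmem hle)

namespace MvPolynomial

variable {σ K : Type*} [CommSemiring K]

theorem exists_forall_lt_pow {p : ℕ} (hp : 1 < p) (f : MvPolynomial σ K) :
    ∃ k, ∀ d ∈ f.support, ∀ i, d i < p ^ k :=
  ⟨f.totalDegree, fun d hd i =>
    ((Finsupp.le_degree i d).trans (le_totalDegree hd)).trans_lt (Nat.lt_pow_self hp)⟩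

theorem notMem_span_X_pow_iff {q : ℕ} {g : MvPolynomial σ K} :
    g ∉ Ideal.span (Set.range fun i => (X i : MvPolynomial σ K) ^ q) ↔
      ∃ d ∈ g.support, ∀ i, d i < q := by
  have hgen : (Set.range fun i => (X i : MvPolynomial σ K) ^ q) =
      (monomial · 1) '' Set.range fun i => Finsupp.single i q := by
    rw [← Set.range_comp]
    simp only [X_pow_eq_monomial, Function.comp_def]
  simp [hgen, mem_ideal_span_monomial_image, Finsupp.single_le_iff]

variable (p : ℕ) [ExpChar K p]

theorem notMem_frobeniusPower_idealOfVars_iff {e : ℕ} {g : MvPolynomial σ K} :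
    g ∉ frobeniusPower (idealOfVars σ K) (p ^ e) ↔ ∃ d ∈ g.support, ∀ i, d i < p ^ e := by
  rw [idealOfVars, frobeniusPower_span, ← Set.range_comp]
  exact notMem_span_X_pow_iff

theorem coeff_pow_expChar_pow_smul (g : MvPolynomial σ K) (e : ℕ) (a : σ →₀ ℕ) :
    (g ^ p ^ e).coeff (p ^ e • a) = g.coeff a ^ p ^ e := by
  rw [← map_iterateFrobenius_expand, coeff_map,
    coeff_expand_smul _ (expChar_pow_pos K p e).ne', iterateFrobenius_def]

theorem exists_eq_smul_of_mem_support_pow_expChar_pow {g : MvPolynomial σ K} {e : ℕ}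
    {u : σ →₀ ℕ} (hu : u ∈ (g ^ p ^ e).support) : ∃ w ∈ g.support, u = p ^ e • w := by
  classical
  rw [← map_iterateFrobenius_expand] at hu
  obtain ⟨w, hw, rfl⟩ := Finset.mem_image.mp (support_expand_subset g (support_map_subset _ _ hu))
  exact ⟨w, hw, rfl⟩

theorem coeff_pow_expChar_pow_mul_of_lt {g h : MvPolynomial σ K} {k : ℕ}
    (hh : ∀ d ∈ h.support, ∀ i, d i < p ^ k) (a : σ →₀ ℕ) {b : σ →₀ ℕ} (hb : ∀ i, b i < p ^ k) :
    (g ^ p ^ k * h).coeff (p ^ k • a + b) = g.coeff a ^ p ^ k * h.coeff b := by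
  classical
  rw [coeff_mul, Finset.sum_eq_single_of_mem (p ^ k • a, b) (by simp),
    coeff_pow_expChar_pow_smul]
  rintro ⟨u, v⟩ huv hne
  rw [Finset.HasAntidiagonal.mem_antidiagonal] at huv
  by_contra hne0
  obtain ⟨w, -, rfl⟩ := exists_eq_smul_of_mem_support_pow_expChar_pow p
    (mem_support_iff.mpr (left_ne_zero_of_mul hne0))
  have hv := hh v (mem_support_iff.mpr (right_ne_zero_of_mul hne0))
  have hcomp i := Nat.eq_and_eq_of_mul_add_eq_mul_add (hv i) (hb i)
    (by simpa using DFunLike.congr_fun huv i)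
  exact hne (Prod.ext (by ext i; simp [(hcomp i).1]) (Finsupp.ext fun i => (hcomp i).2))

theorem pow_expChar_pow_mul_notMem_frobeniusPower [NoZeroDivisors K] {g h : MvPolynomial σ K}
    {e k : ℕ} (hg : g ∉ frobeniusPower (idealOfVars σ K) (p ^ e)) (hh0 : h ≠ 0)
    (hh : ∀ d ∈ h.support, ∀ i, d i < p ^ k) :
    g ^ p ^ k * h ∉ frobeniusPower (idealOfVars σ K) (p ^ (e + k)) := by
  obtain ⟨a, ha, hae⟩ := (notMem_frobeniusPower_idealOfVars_iff p).mp hg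
  obtain ⟨b, hb⟩ := support_nonempty.mpr hh0
  refine (notMem_frobeniusPower_idealOfVars_iff p).mpr ⟨p ^ k • a + b, ?_, fun i => ?_⟩
  · rw [mem_support_iff, coeff_pow_expChar_pow_mul_of_lt p hh a (hh b hb)]
    exact mul_ne_zero (pow_ne_zero _ (mem_support_iff.mp ha)) (mem_support_iff.mp hb)
  · calc (p ^ k • a + b) i = p ^ k * a i + b i := by simp
      _ < p ^ k * (a i + 1) := by have := hh b hb i; linarith
      _ ≤ p ^ k * p ^ e := Nat.mul_le_mul_left _ (hae i)
      _ = p ^ (e + k) := by rw [pow_add, mul_comm]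

end MvPolynomial

section Nu

variable {p m : ℕ} {K : Type*} [Field K] [ExpChar K p] {f : MvPolynomial (Fin m) K}

theorem pow_notMem_frobeniusPower_iff_le_nu (hfm : f ∈ idealOfVars (Fin m) K) {e n : ℕ} :
    f ^ n ∉ frobeniusPower (idealOfVars (Fin m) K) (p ^ e) ↔ n ≤ nu p f e := by
  refine Nat.mem_iff_le_sSup_of_isLowerSet (Ideal.isLowerSet_setOf_pow_notMem _ f) ⟨0, ?_⟩
    ⟨m * p ^ e, fun n hn => ?_⟩
  · rw [Set.mem_ofPred_eq, pow_zero, notMem_frobeniusPower_idealOfVars_iff]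
    exact ⟨0, by simp [support_one], fun _ => expChar_pow_pos K p e⟩
  · obtain ⟨d, hd, hdq⟩ := (notMem_frobeniusPower_idealOfVars_iff p).mp hn
    calc n ≤ d.degree := (mem_pow_idealOfVars_iff n _).mp (Ideal.pow_mem_pow hfm n) d hd
      _ = ∑ i, d i := Finsupp.degree_eq_sum d
      _ ≤ ∑ _i : Fin m, p ^ e := Finset.sum_le_sum fun i _ => (hdq i).le
      _ = m * p ^ e := by simp

theorem nu_succ_add_one_le (hfm : f ∈ idealOfVars (Fin m) K) (e : ℕ) :
    nu p f (e + 1) + 1 ≤ p * (nu p f e + 1) := by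
  have hmem : f ^ (nu p f e + 1) ∈ frobeniusPower (idealOfVars (Fin m) K) (p ^ e) :=
    not_not.mp (mt (pow_notMem_frobeniusPower_iff_le_nu hfm).mp (Nat.not_succ_le_self _))
  have hmem' := pow_mem_frobeniusPower_of_mem p hmem 1
  rw [← pow_mul, pow_one, mul_comm] at hmem'
  exact not_le.mp fun hle => (pow_notMem_frobeniusPower_iff_le_nu hfm).mpr hle hmem'

theorem pow_mul_nu_add_one_le_nu_add (hfm : f ∈ idealOfVars (Fin m) K) (hf0 : f ≠ 0) {k : ℕ}
    (hk : ∀ d ∈ f.support, ∀ i, d i < p ^ k) (e : ℕ) :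
    p ^ k * nu p f e + 1 ≤ nu p f (e + k) := by
  have h := pow_expChar_pow_mul_notMem_frobeniusPower p
    ((pow_notMem_frobeniusPower_iff_le_nu hfm (e := e)).mpr le_rfl) hf0 hk
  rw [← pow_mul, ← pow_succ, mul_comm] at h
  exact (pow_notMem_frobeniusPower_iff_le_nu hfm).mp h

theorem mul_nu_le_nu_succ (hfm : f ∈ idealOfVars (Fin m) K) (e : ℕ) :
    p * nu p f e ≤ nu p f (e + 1) := by
  have h := pow_expChar_pow_mul_notMem_frobeniusPower p (k := 1)
    ((pow_notMem_frobeniusPower_iff_le_nu hfm (e := e)).mpr le_rfl) one_ne_zero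
    (by simp [support_one, expChar_pos K p])
  rw [mul_one, ← pow_mul, pow_one, mul_comm] at h
  exact (pow_notMem_frobeniusPower_iff_le_nu hfm).mp h

end Nu

theorem monotone_div_pow_of_mul_le {x : ℕ → ℝ} {r : ℝ} (hr : 0 < r)
    (h : ∀ n, r * x n ≤ x (n + 1)) : Monotone fun n => x n / r ^ n := by
  refine monotone_nat_of_le_succ fun n => ?_
  calc x n / r ^ n = r * x n / r ^ (n + 1) := by rw [pow_succ']; field_simp
    _ ≤ x (n + 1) / r ^ (n + 1) := by gcongr; exact h n

theorem antitone_div_pow_of_le_mul {x : ℕ → ℝ} {r : ℝ} (hr : 0 < r)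
    (h : ∀ n, x (n + 1) ≤ r * x n) : Antitone fun n => x n / r ^ n := by
  refine antitone_nat_of_succ_le fun n => ?_
  calc x (n + 1) / r ^ (n + 1) ≤ r * x n / r ^ (n + 1) := by gcongr; exact h n
    _ = x n / r ^ n := by rw [pow_succ']; field_simp

section Threshold

variable {p m : ℕ} {K : Type*} [Field K] [ExpChar K p] {f : MvPolynomial (Fin m) K} {c : ℝ}

theorem nu_div_pow_le_of_tendsto
    (hc : Tendsto (fun e : ℕ => (nu p f e : ℝ) / (p : ℝ) ^ e) atTop (nhds c))
    (hfm : f ∈ idealOfVars (Fin m) K) (e : ℕ) :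
    (nu p f e : ℝ) / p ^ e ≤ c :=
  (monotone_div_pow_of_mul_le (by exact_mod_cast expChar_pos K p)
    fun n => by exact_mod_cast mul_nu_le_nu_succ hfm n).ge_of_tendsto hc e

theorem nu_lt_pow_mul_of_tendsto
    (hc : Tendsto (fun e : ℕ => (nu p f e : ℝ) / (p : ℝ) ^ e) atTop (nhds c))
    (hp : 1 < p) (hfm : f ∈ idealOfVars (Fin m) K) (hf0 : f ≠ 0) (e : ℕ) :
    (nu p f e : ℝ) < p ^ e * c := by
  obtain ⟨k, hk⟩ := exists_forall_lt_pow hp f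
  have hstep : (p : ℝ) ^ k * nu p f e + 1 ≤ nu p f (e + k) := by
    exact_mod_cast pow_mul_nu_add_one_le_nu_add hfm hf0 hk e
  have hle := nu_div_pow_le_of_tendsto hc hfm (e + k)
  rw [div_le_iff₀ (by positivity), pow_add] at hle
  have hpk : (0 : ℝ) < p ^ k := by positivity
  nlinarith

theorem pow_mul_le_nu_add_one_of_tendsto
    (hc : Tendsto (fun e : ℕ => (nu p f e : ℝ) / (p : ℝ) ^ e) atTop (nhds c))
    (hp : 1 < p) (hfm : f ∈ idealOfVars (Fin m) K) (e : ℕ) : p ^ e * c ≤ nu p f e + 1 := by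
  have hp0 : (0 : ℝ) < p := by exact_mod_cast expChar_pos K p
  have hlim : Tendsto (fun e => ((nu p f e : ℝ) + 1) / p ^ e) atTop (nhds c) := by
    have h0 := tendsto_pow_atTop_nhds_zero_of_lt_one (inv_nonneg.mpr hp0.le)
      (inv_lt_one_of_one_lt₀ (by exact_mod_cast hp))
    simpa [add_div, inv_pow] using hc.add h0
  have hanti := antitone_div_pow_of_le_mul (x := fun n => (nu p f n : ℝ) + 1) hp0 fun n => by
    exact_mod_cast nu_succ_add_one_le hfm n
  rw [← le_div_iff₀' (by positivity)]
  exact hanti.le_of_tendsto hlim e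

end Threshold

theorem nu_eq_ceil_sub_one_general
    (p : ℕ) (hp : p.Prime) (K : Type*) [Field K] [CharP K p]
    (m : ℕ) (f : MvPolynomial (Fin m) K) (hf0 : f ≠ 0)
    (hfm : f ∈ Ideal.span (Set.range (MvPolynomial.X : Fin m → MvPolynomial (Fin m) K)))
    (c : ℝ)
    (hc : Tendsto (fun e : ℕ => (nu p f e : ℝ) / (p : ℝ) ^ e) atTop (nhds c)) :
    ∀ e : ℕ, (nu p f e : ℤ) = ⌈(p : ℝ) ^ e * c⌉ - 1 := by
  have := ExpChar.prime (R := K) hp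
  intro e
  have hlt := nu_lt_pow_mul_of_tendsto hc hp.one_lt hfm hf0 e
  have hle := pow_mul_le_nu_add_one_of_tendsto hc hp.one_lt hfm e
  rw [eq_sub_iff_add_eq, eq_comm, Int.ceil_eq_iff]
  push_cast
  constructor <;> linarith

/-- If `c` is the F-pure threshold of `f` at the origin, then
`ν_f(p^e) = ⌈p^e · c⌉ - 1` for every `e`. -/
theorem nu_eq_ceil_sub_one
    (p : ℕ) (hp : p.Prime) (K : Type*) [Field K] [Fintype K] [CharP K p]
    (m : ℕ) (f : MvPolynomial (Fin m) K) (hf0 : f ≠ 0)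
    (hfm : f ∈ Ideal.span (Set.range (MvPolynomial.X : Fin m → MvPolynomial (Fin m) K)))
    (c : ℝ)
    (hc : Tendsto (fun e : ℕ => (nu p f e : ℝ) / (p : ℝ) ^ e) atTop (nhds c)) :
    ∀ e : ℕ, (nu p f e : ℤ) = ⌈(p : ℝ) ^ e * c⌉ - 1 :=
  nu_eq_ceil_sub_one_general p hp K m f hf0 hfm c hc
end

section
/- Let f ∈ 𝔪 be a nonzero polynomial. Then for every e ∈ ℕ, ν_f(p^{e+1}) ≤ p · ν_f(p^e) + p − 1; that is, the error term L := ν_f(p^{e+1}) − p·ν_f(p^e) satisfies 0 ≤ L ≤ p − 1. -/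
open Filter

/-- Frobenius: if `g ∈ span s` then `g ^ p ^ k ∈ span ((· ^ p ^ k) '' s)` in char `p`. -/
lemma pow_mem_span_pow_image {R : Type*} [CommSemiring R] (p : ℕ) [Fact p.Prime] [CharP R p]
    (s : Set R) {g : R} (hg : g ∈ Ideal.span s) (k : ℕ) :
    g ^ p ^ k ∈ Ideal.span ((· ^ p ^ k) '' s) := by
  have hq : p ^ k ≠ 0 := pow_ne_zero k (Fact.out (p := p.Prime)).ne_zero
  induction hg using Submodule.span_induction with
  | mem x hx => exact Ideal.subset_span ⟨x, hx, rfl⟩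
  | zero => simpa [zero_pow hq] using Ideal.zero_mem _
  | add a b ha hb iha ihb =>
      rw [add_pow_char_pow]
      exact Ideal.add_mem _ iha ihb
  | smul c a ha iha =>
      rw [smul_eq_mul, mul_pow]
      exact Ideal.mul_mem_left _ _ iha

/-- In char `p`, the `p^k`-th Frobenius power of a span is the span of the
`p^k`-th powers of the generators. -/
lemma frobeniusPower_span_s6 {R : Type*} [CommSemiring R] (p : ℕ) [Fact p.Prime] [CharP R p]
    (s : Set R) (k : ℕ) :
    frobeniusPower (Ideal.span s) (p ^ k) = Ideal.span ((· ^ p ^ k) '' s) := by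
  apply le_antisymm
  · rw [frobeniusPower, Ideal.span_le]
    rintro _ ⟨g, hg, rfl⟩
    exact pow_mem_span_pow_image p s hg k
  · rw [Ideal.span_le]
    rintro _ ⟨x, hx, rfl⟩
    exact Ideal.subset_span ⟨x, Ideal.subset_span hx, rfl⟩

/-- Membership in the ideal generated by `q`-th powers of the variables. -/
lemma mem_span_X_pow {K : Type*} [Field K] {m q : ℕ} {g : MvPolynomial (Fin m) K} :
    g ∈ Ideal.span ((· ^ q) '' Set.range (MvPolynomial.X : Fin m → MvPolynomial (Fin m) K)) ↔
      ∀ d ∈ g.support, ∃ i, q ≤ d i := by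
  have himg : ((· ^ q) '' Set.range (MvPolynomial.X : Fin m → MvPolynomial (Fin m) K))
      = (fun s => MvPolynomial.monomial s (1 : K)) ''
        Set.range (fun i : Fin m => Finsupp.single i q) := by
    ext x
    simp only [Set.mem_image, Set.mem_range, exists_exists_eq_and]
    constructor
    · rintro ⟨i, rfl⟩; exact ⟨i, (MvPolynomial.X_pow_eq_monomial).symm⟩
    · rintro ⟨i, rfl⟩; exact ⟨i, MvPolynomial.X_pow_eq_monomial⟩
  rw [himg, MvPolynomial.mem_ideal_span_monomial_image]
  constructor
  · intro h d hd
    obtain ⟨si, ⟨i, rfl⟩, hle⟩ := h d hd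
    exact ⟨i, Finsupp.single_le_iff.mp hle⟩
  · intro h d hd
    obtain ⟨i, hi⟩ := h d hd
    exact ⟨Finsupp.single i q, ⟨i, rfl⟩, Finsupp.single_le_iff.mpr hi⟩

/-- Monomials of `f ^ n` have total degree at least `n` when `f ∈ 𝔪`. -/
lemma deg_pow {K : Type*} [Field K] {m : ℕ} {f : MvPolynomial (Fin m) K}
    (hf : ∀ d ∈ f.support, ∃ i, d i ≠ 0) :
    ∀ n : ℕ, ∀ d ∈ (f ^ n).support, n ≤ ∑ i, d i := by
  intro n
  induction n with
  | zero => intro d hd; exact Nat.zero_le _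
  | succ n ih =>
      intro d hd
      rw [pow_succ] at hd
      have := MvPolynomial.support_mul _ _ hd
      rw [Finset.mem_add] at this
      obtain ⟨a, ha, b, hb, rfl⟩ := this
      obtain ⟨i, hi⟩ := hf b hb
      have h1 : 1 ≤ ∑ i, b i :=
        le_trans (Nat.one_le_iff_ne_zero.mpr hi)
          (Finset.single_le_sum (fun j _ => Nat.zero_le _) (Finset.mem_univ i))
      have h2 : ∑ j, (a + b) j = (∑ j, a j) + ∑ j, b j := by
        simp [Finsupp.add_apply, Finset.sum_add_distrib]
      have h3 : n ≤ ∑ j, a j := ih a ha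
      rw [h2]
      omega

/-- For every `e`, `ν_f(p^{e+1}) ≤ p · ν_f(p^e) + p - 1`; that is, the error term
`L = ν_f(p^{e+1}) - p·ν_f(p^e)` satisfies `0 ≤ L ≤ p - 1`. -/
theorem nu_succ_le_p_mul_nu_add_p_sub_one
    (p : ℕ) (hp : p.Prime) (K : Type*) [Field K] [Fintype K] [CharP K p]
    (m : ℕ) (f : MvPolynomial (Fin m) K) (hf0 : f ≠ 0)
    (hfm : f ∈ Ideal.span (Set.range (MvPolynomial.X : Fin m → MvPolynomial (Fin m) K))) :
    ∀ e : ℕ, (nu p f (e + 1) : ℤ) ≤ p * nu p f e + p - 1 := by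
  haveI : Fact p.Prime := ⟨hp⟩
  intro e
  set 𝔪 : Ideal (MvPolynomial (Fin m) K) :=
    Ideal.span (Set.range (MvPolynomial.X : Fin m → MvPolynomial (Fin m) K)) with h𝔪
  -- monomials of f are nonzero
  have hsupp : ∀ d ∈ f.support, ∃ i, d i ≠ 0 := by
    intro d hd
    obtain ⟨i, _, hi⟩ :=
      (MvPolynomial.mem_ideal_span_X_image (s := (Set.univ : Set (Fin m)))).mp
        (by simpa [Set.image_univ] using hfm) d hd
    exact ⟨i, hi⟩
  -- high powers of f lie in the Frobenius power
  have key : ∀ k n : ℕ, m * (p ^ k - 1) + 1 ≤ n → f ^ n ∈ frobeniusPower 𝔪 (p ^ k) := by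
    intro k n hn
    set N := m * (p ^ k - 1) + 1 with hN
    have hfN : f ^ N ∈ frobeniusPower 𝔪 (p ^ k) := by
      rw [h𝔪, frobeniusPower_span_s6 p _ k, mem_span_X_pow]
      intro d hd
      have hdeg := deg_pow hsupp N d hd
      by_contra hcon
      push_neg at hcon
      have hq1 : 1 ≤ p ^ k := Nat.one_le_pow _ _ hp.pos
      have : ∑ i, d i ≤ m * (p ^ k - 1) := by
        calc ∑ i, d i ≤ ∑ _i : Fin m, (p ^ k - 1) :=
              Finset.sum_le_sum (fun i _ => by have := hcon i; omega)
          _ = m * (p ^ k - 1) := by simp [Finset.sum_const, mul_comm]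
      omega
    have : f ^ n = f ^ N * f ^ (n - N) := by
      rw [← pow_add]; congr 1; omega
    rw [this]
    exact Ideal.mul_mem_right _ _ hfN
  -- f ^ (nu + 1) ∈ 𝔪^{[p^e]}
  have hbdd : BddAbove {n : ℕ | f ^ n ∉ frobeniusPower 𝔪 (p ^ e)} := by
    refine ⟨m * (p ^ e - 1) + 1, fun n hn => ?_⟩
    by_contra hcon
    exact hn (key e n (by omega))
  have hstep : f ^ (nu p f e + 1) ∈ frobeniusPower 𝔪 (p ^ e) := by
    by_contra h
    have : nu p f e + 1 ≤ nu p f e := le_csSup hbdd h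
    omega
  -- hence f ^ (p * (nu + 1)) ∈ 𝔪^{[p^{e+1}]}
  have hnext : f ^ (p * (nu p f e + 1)) ∈ frobeniusPower 𝔪 (p ^ (e + 1)) := by
    rw [h𝔪, frobeniusPower_span_s6 p _ (e + 1)]
    rw [h𝔪, frobeniusPower_span_s6 p _ e] at hstep
    have := pow_mem_span_pow_image p _ hstep 1
    have himg : ((· ^ p ^ 1) ''
        ((· ^ p ^ e) '' Set.range (MvPolynomial.X : Fin m → MvPolynomial (Fin m) K)))
        = ((· ^ p ^ (e + 1)) ''
          Set.range (MvPolynomial.X : Fin m → MvPolynomial (Fin m) K)) := by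
      rw [← Set.image_comp]
      apply Set.image_congr'
      intro x
      simp only [Function.comp_apply, ← pow_mul, pow_succ, pow_zero, one_mul]
    rw [himg] at this
    have hpow : (f ^ (nu p f e + 1)) ^ p ^ 1 = f ^ (p * (nu p f e + 1)) := by
      rw [← pow_mul, pow_one, mul_comm]
    rwa [hpow] at this
  -- conclude
  have hbound : nu p f (e + 1) ≤ p * nu p f e + p - 1 := by
    apply csSup_le'
    intro n hn
    simp only [Set.mem_setOf_eq] at hn
    by_contra hcon
    push_neg at hcon
    have hlt : p * (nu p f e + 1) ≤ n := by
      have hp1 := hp.pos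
      have : p * (nu p f e + 1) = p * nu p f e + p := by ring
      omega
    have : f ^ n = f ^ (p * (nu p f e + 1)) * f ^ (n - p * (nu p f e + 1)) := by
      rw [← pow_add]; congr 1; omega
    exact hn (this ▸ Ideal.mul_mem_right _ _ hnext)
  have hp1 := hp.pos
  have : (nu p f (e + 1) : ℤ) ≤ ((p * nu p f e + p - 1 : ℕ) : ℤ) := by exact_mod_cast hbound
  calc (nu p f (e + 1) : ℤ) ≤ ((p * nu p f e + p - 1 : ℕ) : ℤ) := this
    _ = (p : ℤ) * nu p f e + p - 1 := by
        have h1 : 1 ≤ p * nu p f e + p := by omega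
        push_cast [Nat.cast_sub h1]
        ring
end

section
/- For all ideals A and B of R and every e ∈ ℕ, one has A ⊆ B if and only if A^{[p^e]} ⊆ B^{[p^e]}; in particular, taking Frobenius powers reflects containment of ideals in the polynomial ring R. -/
/-!
For `q = p ^ e`, `J^{[q]}` is the image of `J` under the iterated Frobenius `F`, so the claim is
`F⁻¹(F(B)·R) = B`. This holds because `F` splits: over a perfect ring, the additive map `φ` that
keeps the monomials whose exponents are divisible by `q`, divides those exponents by `q` and takes
`q`-th roots of the coefficients satisfies `φ (r ^ q * s) = r * φ s` and `φ 1 = 1`. Applying `φ`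
to `a ^ q = ∑ sᵢ * bᵢ ^ q` gives `a = ∑ bᵢ * φ sᵢ`.
-/

namespace Finsupp

variable {σ : Type*} {q : ℕ}

theorem nsmul_le_nsmul_iff (hq : q ≠ 0) {α β : σ →₀ ℕ} : q • α ≤ q • β ↔ α ≤ β := by
  simp only [le_def, smul_apply, smul_eq_mul, Nat.mul_le_mul_left_iff (Nat.pos_of_ne_zero hq)]

theorem nsmul_tsub (α β : σ →₀ ℕ) : q • β - q • α = q • (β - α) := by
  ext i
  simp [Nat.mul_sub]

end Finsupp

theorem Ideal.comap_map_eq_self_of_splitting {R S : Type*} [CommSemiring R] [CommSemiring S]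
    {f : R →+* S} (φ : S →+ R) (hφ : ∀ r s, φ (f r * s) = r * φ s) (hφ₁ : φ 1 = 1)
    (I : Ideal R) : (I.map f).comap f = I := by
  refine le_antisymm (fun x hx => ?_) le_comap_map
  obtain ⟨n, c, b, hb⟩ := Submodule.mem_span_set'.mp (mem_comap.mp hx)
  have hx : x = φ (f x) := by rw [← mul_one (f x), hφ, hφ₁, mul_one]
  rw [hx, ← hb, map_sum]
  refine I.sum_mem fun i _ => ?_
  obtain ⟨a, ha, hfa⟩ := (b i).2
  rw [smul_eq_mul, ← hfa, mul_comm, hφ]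
  exact I.mul_mem_right _ ha

namespace MvPolynomial

variable {σ R : Type*} [CommSemiring R]

noncomputable def contract (q : ℕ) [NeZero q] : MvPolynomial σ R →+ MvPolynomial σ R :=
  AddMonoidAlgebra.coeffAddEquiv.symm.toAddMonoidHom.comp <|
    (Finsupp.comapDomain.addMonoidHom (smul_right_injective _ (NeZero.ne q))).comp
      AddMonoidAlgebra.coeffAddEquiv.toAddMonoidHom

section contract

variable {q : ℕ} [NeZero q]

@[simp]
theorem coeff_contract (f : MvPolynomial σ R) (β : σ →₀ ℕ) :
    coeff β (contract q f) = coeff (q • β) f := rfl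

theorem contract_monomial_nsmul_mul (α : σ →₀ ℕ) (c : R) (f : MvPolynomial σ R) :
    contract q (monomial (q • α) c * f) = monomial α c * contract q f := by
  ext β
  simp only [coeff_contract, coeff_monomial_mul', Finsupp.nsmul_le_nsmul_iff (NeZero.ne q),
    Finsupp.nsmul_tsub]

theorem contract_one : contract q (1 : MvPolynomial σ R) = 1 := by
  classical
  ext β
  simp only [coeff_contract, coeff_one, eq_comm (a := (0 : σ →₀ ℕ)),
    nsmul_eq_zero_iff_right (NeZero.ne q)]

end contract

theorem comap_map_iterateFrobenius (p e : ℕ) [ExpChar R p] [PerfectRing R p]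
    (I : Ideal (MvPolynomial σ R)) :
    (I.map (iterateFrobenius _ p e)).comap (iterateFrobenius _ p e) = I := by
  have : NeZero (p ^ e) := ⟨(expChar_pow_pos R p e).ne'⟩
  let ψ : R →+* R := (iterateFrobeniusEquiv R p e).symm
  refine Ideal.comap_map_eq_self_of_splitting ((map ψ).toAddMonoidHom.comp (contract (p ^ e)))
    (fun r s => ?_) (by simp [contract_one]) I
  induction r using induction_on' with
  | monomial α c =>
    have hψ : ψ (c ^ p ^ e) = c := (iterateFrobeniusEquiv R p e).symm_apply_apply c
    simp [iterateFrobenius_def, monomial_pow, contract_monomial_nsmul_mul, hψ]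
  | add r₁ r₂ h₁ h₂ =>
    simp only [AddMonoidHom.comp_apply] at h₁ h₂ ⊢
    rw [map_add, add_mul, map_add, map_add, h₁, h₂, add_mul]

end MvPolynomial

/-- Taking Frobenius powers reflects (and preserves) containment of ideals in a
polynomial ring over a finite field of characteristic `p`:
`A ⊆ B ↔ A^{[p^e]} ⊆ B^{[p^e]}`. -/
theorem le_iff_frobeniusPower_le
    (p : ℕ) (hp : p.Prime) (K : Type*) [Field K] [Fintype K] [CharP K p]
    (m : ℕ) (A B : Ideal (MvPolynomial (Fin m) K)) (e : ℕ) :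
    A ≤ B ↔ frobeniusPower A (p ^ e) ≤ frobeniusPower B (p ^ e) := by
  have : Fact p.Prime := ⟨hp⟩
  change A ≤ B ↔ A.map (iterateFrobenius _ p e) ≤ B.map (iterateFrobenius _ p e)
  rw [Ideal.map_le_iff_le_comap, MvPolynomial.comap_map_iterateFrobenius]
end

section
/- For every ideal I of R and every e ∈ ℕ, there exists a smallest ideal among all ideals A of R satisfying I ⊆ A^{[p^e]}; that is, there is an ideal I^{[1/p^e]} (the p^e-th Frobenius root of I) such that I ⊆ (I^{[1/p^e]})^{[p^e]}, and I^{[1/p^e]} ⊆ A for every ideal A of R with I ⊆ A^{[p^e]}. -/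
open Filter

/-!
Let `K` be a perfect ring of characteristic `p`, `q = p ^ e` and `R = K[X_i : i ∈ σ]` with `σ`
finite. Every `f ∈ R` decomposes as `f = ∑ₐ (fₐ)^q X^a` over the exponents `a < q`
(componentwise), where `fₐ = rootComponent p e a f` collects the monomials of `f` with exponent
`≡ a mod q`, with exponents divided by `q` and coefficients replaced by their `q`-th roots. The
maps `f ↦ fₐ` are additive and satisfy `(g^q h)ₐ = g hₐ`, so they send `A^{[q]}` into `A`. Hence
the ideal generated by the components of the elements of `I` is the least ideal `J` with
`I ⊆ J^{[q]}`: Frobenius root is left adjoint to Frobenius power.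
-/

namespace Finsupp

variable {σ : Type*} (q : ℕ)

noncomputable def divNat (c : σ →₀ ℕ) : σ →₀ ℕ := c.mapRange (· / q) (Nat.zero_div q)

noncomputable def modNat (c : σ →₀ ℕ) : σ →₀ ℕ := c.mapRange (· % q) (Nat.zero_mod q)

@[simp] theorem divNat_apply (c : σ →₀ ℕ) (i : σ) : c.divNat q i = c i / q := mapRange_apply

@[simp] theorem modNat_apply (c : σ →₀ ℕ) (i : σ) : c.modNat q i = c i % q := mapRange_apply

theorem smul_divNat_add_modNat (c : σ →₀ ℕ) : q • c.divNat q + c.modNat q = c := by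
  ext i
  simp [Nat.div_add_mod]

theorem modNat_smul_add (d c : σ →₀ ℕ) : (q • d + c).modNat q = c.modNat q := by
  ext i
  simp

variable {q}

theorem divNat_smul_add (hq : 0 < q) (d c : σ →₀ ℕ) : (q • d + c).divNat q = d + c.divNat q := by
  ext i
  simp [Nat.mul_add_div hq]

theorem modNat_lt (hq : 0 < q) (c : σ →₀ ℕ) (i : σ) : c.modNat q i < q := by
  simpa using Nat.mod_lt (c i) hq

theorem eq_smul_add_iff (hq : 0 < q) {a : σ →₀ ℕ} (ha : ∀ i, a i < q) {b c : σ →₀ ℕ} :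
    c = q • b + a ↔ c.divNat q = b ∧ c.modNat q = a := by
  constructor
  · rintro rfl
    refine ⟨?_, ?_⟩ <;> ext i
    · simp [Nat.mul_add_div hq, Nat.div_eq_of_lt (ha i)]
    · simp [Nat.mod_eq_of_lt (ha i)]
  · rintro ⟨rfl, rfl⟩
    exact (smul_divNat_add_modNat q c).symm

variable (q) [Fintype σ]

open Classical in
noncomputable def residues : Finset (σ →₀ ℕ) :=
  (Fintype.piFinset fun _ => Finset.range q).map equivFunOnFinite.symm.toEmbedding

theorem mem_residues {a : σ →₀ ℕ} : a ∈ residues q ↔ ∀ i, a i < q := by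
  simp [residues]

end Finsupp

theorem nsmul_add_right_injective {M : Type*} [AddMonoid M] [IsRightCancelAdd M]
    [IsAddTorsionFree M] {n : ℕ} (hn : n ≠ 0) (a : M) : Function.Injective fun b : M => n • b + a :=
  (add_left_injective a).comp (nsmul_right_injective hn)

theorem frobeniusPower_mono {R : Type*} [CommSemiring R] {A B : Ideal R} (h : A ≤ B) (q : ℕ) :
    frobeniusPower A q ≤ frobeniusPower B q :=
  Ideal.span_mono (Set.image_mono h)

section PerfectRing

variable {R : Type*} [CommSemiring R] (p n : ℕ) [ExpChar R p] [PerfectRing R p]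

theorem iterateFrobeniusEquiv_symm_pow (x : R) :
    (iterateFrobeniusEquiv R p n).symm (x ^ p ^ n) = x :=
  (iterateFrobeniusEquiv R p n).symm_apply_apply x

theorem iterateFrobeniusEquiv_symm_pow_p_pow (x : R) :
    (iterateFrobeniusEquiv R p n).symm x ^ p ^ n = x :=
  (iterateFrobeniusEquiv R p n).apply_symm_apply x

end PerfectRing

namespace MvPolynomial

open Finsupp

variable {σ K : Type*} [CommSemiring K] (p e : ℕ) [ExpChar K p] [PerfectRing K p]

noncomputable def rootComponent (a : σ →₀ ℕ) : MvPolynomial σ K →+ MvPolynomial σ K where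
  toFun f := AddMonoidAlgebra.ofCoeff <| Finsupp.onFinset
    (f.support.preimage (p ^ e • · + a)
      (nsmul_add_right_injective (pow_pos (expChar_pos K p) e).ne' a).injOn)
    (fun b => (iterateFrobeniusEquiv K p e).symm (coeff (p ^ e • b + a) f))
    (fun b hb => Finset.mem_preimage.2 <| mem_support_iff.2 fun h => hb <| by rw [h, map_zero])
  map_zero' := by
    ext b
    exact map_zero (iterateFrobeniusEquiv K p e).symm
  map_add' f g := by
    ext b
    rw [coeff_add]
    exact (congrArg _ (coeff_add _ f g)).trans (map_add (iterateFrobeniusEquiv K p e).symm _ _)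

theorem coeff_rootComponent (a b : σ →₀ ℕ) (f : MvPolynomial σ K) :
    coeff b (rootComponent p e a f) =
      (iterateFrobeniusEquiv K p e).symm (coeff (p ^ e • b + a) f) :=
  rfl

variable {p e}

theorem rootComponent_monomial [DecidableEq σ] {a : σ →₀ ℕ} (ha : ∀ i, a i < p ^ e)
    (c : σ →₀ ℕ) (v : K) :
    rootComponent p e a (monomial c v) = if c.modNat (p ^ e) = a
      then monomial (c.divNat (p ^ e)) ((iterateFrobeniusEquiv K p e).symm v) else 0 := by
  ext b
  simp only [coeff_rootComponent, coeff_monomial,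
    eq_smul_add_iff (pow_pos (expChar_pos K p) e) ha]
  by_cases hc : c.modNat (p ^ e) = a
  · by_cases hb : c.divNat (p ^ e) = b <;> simp [hc, hb, coeff_monomial]
  · simp [hc]

theorem rootComponent_pow_mul {a : σ →₀ ℕ} (ha : ∀ i, a i < p ^ e) (g h : MvPolynomial σ K) :
    rootComponent p e a (g ^ p ^ e * h) = g * rootComponent p e a h := by
  classical
  induction h using induction_on' with
  | add h₁ h₂ ih₁ ih₂ => rw [mul_add, map_add, map_add, ih₁, ih₂, mul_add]
  | monomial c v =>
    induction g using induction_on' with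
    | add g₁ g₂ ih₁ ih₂ => rw [add_pow_expChar_pow, add_mul, map_add, ih₁, ih₂, add_mul]
    | monomial d w =>
      rw [monomial_pow, monomial_mul, rootComponent_monomial ha, rootComponent_monomial ha,
        modNat_smul_add, divNat_smul_add (pow_pos (expChar_pos K p) e)]
      split_ifs
      · rw [monomial_mul, map_mul, iterateFrobeniusEquiv_symm_pow]
      · rw [mul_zero]

theorem sum_rootComponent_pow_mul_monomial [Fintype σ] (f : MvPolynomial σ K) :
    ∑ a ∈ residues (p ^ e), rootComponent p e a f ^ p ^ e * monomial a 1 = f := by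
  classical
  have hq : 0 < p ^ e := pow_pos (expChar_pos K p) e
  induction f using induction_on' with
  | add f g hf hg =>
    simp only [map_add, add_pow_expChar_pow, add_mul, Finset.sum_add_distrib, hf, hg]
  | monomial c v =>
    rw [Finset.sum_eq_single (c.modNat (p ^ e))]
    · rw [rootComponent_monomial (modNat_lt hq c), if_pos rfl,
        monomial_pow, monomial_mul, iterateFrobeniusEquiv_symm_pow_p_pow, mul_one,
        smul_divNat_add_modNat]
    · intro a ha hne
      rw [rootComponent_monomial ((mem_residues _).1 ha), if_neg hne.symm, zero_pow hq.ne',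
        zero_mul]
    · intro h
      exact absurd ((mem_residues _).2 (modNat_lt hq c)) h

theorem rootComponent_mem_of_mem_frobeniusPower {a : σ →₀ ℕ} (ha : ∀ i, a i < p ^ e)
    {A : Ideal (MvPolynomial σ K)} {f : MvPolynomial σ K} (hf : f ∈ frobeniusPower A (p ^ e)) :
    rootComponent p e a f ∈ A := by
  induction hf using Submodule.closure_induction with
  | zero => rw [map_zero]; exact A.zero_mem
  | add x y _ _ hx hy => rw [map_add]; exact A.add_mem hx hy
  | smul_mem r x hx =>
    obtain ⟨g, hg, rfl⟩ := hx
    rw [smul_eq_mul, mul_comm, rootComponent_pow_mul ha]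
    exact A.mul_mem_right _ hg

variable (p e) [Fintype σ]

noncomputable def frobeniusRoot (I : Ideal (MvPolynomial σ K)) : Ideal (MvPolynomial σ K) :=
  Ideal.span (⋃ a ∈ residues (p ^ e), rootComponent p e a '' I)

theorem le_frobeniusPower_frobeniusRoot (I : Ideal (MvPolynomial σ K)) :
    I ≤ frobeniusPower (frobeniusRoot p e I) (p ^ e) := by
  intro f hf
  rw [← sum_rootComponent_pow_mul_monomial (p := p) (e := e) f]
  refine Ideal.sum_mem _ fun a ha => Ideal.mul_mem_right _ _ (Ideal.subset_span ?_)
  exact Set.mem_image_of_mem _ (Ideal.subset_span (Set.mem_biUnion ha ⟨f, hf, rfl⟩))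

theorem frobeniusRoot_le_iff {I A : Ideal (MvPolynomial σ K)} :
    frobeniusRoot p e I ≤ A ↔ I ≤ frobeniusPower A (p ^ e) := by
  refine ⟨fun h => (le_frobeniusPower_frobeniusRoot p e I).trans (frobeniusPower_mono h _),
    fun h => Ideal.span_le.2 ?_⟩
  simp only [Set.iUnion_subset_iff, Set.image_subset_iff]
  exact fun a ha f hf => rootComponent_mem_of_mem_frobeniusPower ((mem_residues _).1 ha) (h hf)

theorem gc_frobeniusRoot_frobeniusPower :
    GaloisConnection (frobeniusRoot (σ := σ) (K := K) p e) (frobeniusPower · (p ^ e)) :=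
  fun _ _ => frobeniusRoot_le_iff p e

end MvPolynomial

open MvPolynomial in
/-- Frobenius roots exist: for every ideal `I` of the polynomial ring and every `e`,
there is a smallest ideal `I^{[1/p^e]}` among all ideals `A` with `I ⊆ A^{[p^e]}`. -/
theorem frobeniusRoot_exists
    (p : ℕ) (hp : p.Prime) (K : Type*) [Field K] [Fintype K] [CharP K p]
    (m : ℕ) (I : Ideal (MvPolynomial (Fin m) K)) (e : ℕ) :
    ∃ Iroot : Ideal (MvPolynomial (Fin m) K),
      I ≤ frobeniusPower Iroot (p ^ e) ∧
        ∀ A : Ideal (MvPolynomial (Fin m) K), I ≤ frobeniusPower A (p ^ e) → Iroot ≤ A := by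
  have := Fact.mk hp
  have gc := gc_frobeniusRoot_frobeniusPower (σ := Fin m) (K := K) p e
  exact ⟨frobeniusRoot p e I, gc.le_u_l I, fun A => (gc I A).2⟩
end
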